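/- Let 1 ≤ p < 2 and let N be Poisson distributed with parameter 0 ≤ λ ≤ 1. Then λ^2 ≤ E|N − λ|^p · E|N − λ|^{4−p}, and hence, using the upper bound E|N−λ|^{4−p} ≤ c_{4−p} λ, one has E|N − λ|^p ≥ λ / c_{4−p}. -/

import Mathlib

open MeasureTheory ProbabilityTheory Real
open scoped NNReal Nat

/-!
Cauchy–Schwarz applied to `|N - λ| ^ (p / 2) * |N - λ| ^ ((4 - p) / 2)` bounds the square of
`E|N - λ|² = Var N = λ` by `E|N - λ|^p · E|N - λ|^(4 - p)`. The variance comes from the Stein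
identity `E[N f(N)] = λ E[f(N + 1)]`, and all the moments involved are finite because `N` has
exponential moments of every order.
-/

section CauchySchwarz

variable {Ω : Type*} {mΩ : MeasurableSpace Ω} {μ : Measure Ω}

theorem sq_integral_mul_le_of_nonneg {f g : Ω → ℝ} (hf0 : 0 ≤ᵐ[μ] f) (hg0 : 0 ≤ᵐ[μ] g)
    (hf : MemLp f 2 μ) (hg : MemLp g 2 μ) :
    (∫ ω, f ω * g ω ∂μ) ^ 2 ≤ (∫ ω, f ω ^ 2 ∂μ) * ∫ ω, g ω ^ 2 ∂μ := by
  have hHolder := integral_mul_le_Lp_mul_Lq_of_nonneg HolderConjugate.two_two hf0 hg0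
    (by simpa using hf) (by simpa using hg)
  simp only [rpow_two, ← sqrt_eq_rpow] at hHolder
  have hfg0 : 0 ≤ ∫ ω, f ω * g ω ∂μ :=
    integral_nonneg_of_ae (by filter_upwards [hf0, hg0] with ω hf hg using mul_nonneg hf hg)
  calc (∫ ω, f ω * g ω ∂μ) ^ 2
      ≤ (√(∫ ω, f ω ^ 2 ∂μ) * √(∫ ω, g ω ^ 2 ∂μ)) ^ 2 := pow_le_pow_left₀ hfg0 hHolder 2
    _ = (∫ ω, f ω ^ 2 ∂μ) * ∫ ω, g ω ^ 2 ∂μ := by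
      rw [mul_pow, sq_sqrt (integral_nonneg fun _ ↦ sq_nonneg _),
        sq_sqrt (integral_nonneg fun _ ↦ sq_nonneg _)]

theorem sq_integral_abs_rpow_add_div_two_le {X : Ω → ℝ} (hX : AEMeasurable X μ)
    {a b : ℝ} (ha : 0 ≤ a) (hb : 0 ≤ b) (hXa : Integrable (fun ω ↦ |X ω| ^ a) μ)
    (hXb : Integrable (fun ω ↦ |X ω| ^ b) μ) :
    (∫ ω, |X ω| ^ ((a + b) / 2) ∂μ) ^ 2 ≤ (∫ ω, |X ω| ^ a ∂μ) * ∫ ω, |X ω| ^ b ∂μ := by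
  have sq_rpow_half (s : ℝ) (x : ℝ) : (|x| ^ (s / 2)) ^ 2 = |x| ^ s := by
    rw [← rpow_mul_natCast (abs_nonneg x)]; ring_nf
  have memLp_rpow_half {s : ℝ} (hs : Integrable (fun ω ↦ |X ω| ^ s) μ) :
      MemLp (fun ω ↦ |X ω| ^ (s / 2)) 2 μ := by
    refine (memLp_two_iff_integrable_sq (hX.abs.pow_const _).aestronglyMeasurable).2 ?_
    simpa only [sq_rpow_half] using hs
  have hCS := sq_integral_mul_le_of_nonneg (.of_forall fun ω ↦ rpow_nonneg (abs_nonneg (X ω)) _)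
    (.of_forall fun ω ↦ rpow_nonneg (abs_nonneg (X ω)) _) (memLp_rpow_half hXa)
    (memLp_rpow_half hXb)
  have rpow_mid (ω : Ω) : |X ω| ^ ((a + b) / 2) = |X ω| ^ (a / 2) * |X ω| ^ (b / 2) := by
    rw [add_div, rpow_add_of_nonneg (abs_nonneg _) (by positivity) (by positivity)]
  simpa only [sq_rpow_half, rpow_mid] using hCS

end CauchySchwarz

namespace ProbabilityTheory

variable (r : ℝ≥0)

lemma integrable_exp_mul_poissonMeasure (t : ℝ) :
    Integrable (fun n : ℕ ↦ exp (t * n)) (poissonMeasure r) := by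
  refine integrable_poissonMeasure_iff.2 <|
    ((summable_pow_div_factorial (r * exp t)).mul_left (exp (-r))).congr fun n ↦ ?_
  rw [norm_of_nonneg (exp_nonneg _), mul_pow, ← exp_nat_mul]
  ring_nf

lemma integrableExpSet_poissonMeasure :
    integrableExpSet (fun n : ℕ ↦ (n : ℝ)) (poissonMeasure r) = Set.univ :=
  Set.eq_univ_of_forall (integrable_exp_mul_poissonMeasure r)

lemma memLp_natCast_poissonMeasure (p : ℝ≥0) :
    MemLp (fun n : ℕ ↦ (n : ℝ)) p (poissonMeasure r) :=
  memLp_of_mem_interior_integrableExpSet (by simp [integrableExpSet_poissonMeasure]) p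

lemma integrable_abs_sub_rpow_poissonMeasure (x : ℝ) {q : ℝ} (hq : 0 ≤ q) :
    Integrable (fun n : ℕ ↦ |(n : ℝ) - x| ^ q) (poissonMeasure r) := by
  simpa [hq] using
    ((memLp_natCast_poissonMeasure r q.toNNReal).sub (memLp_const x)).integrable_norm_rpow'

lemma integral_natCast_mul_poissonMeasure (f : ℕ → ℝ) :
    ∫ n, n * f n ∂poissonMeasure r = r * ∫ n, f (n + 1) ∂poissonMeasure r := by
  set g : ℕ → ℝ := fun n ↦ exp (-r) * r ^ n / n ! * (n * f n)
  have hg_succ (n : ℕ) : g (n + 1) = r * (exp (-r) * r ^ n / n ! * f (n + 1)) := by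
    simp only [g, Nat.factorial_succ, Nat.cast_mul, pow_succ]
    field_simp
  simp only [integral_poissonMeasure, smul_eq_mul, ← tsum_mul_left, ← hg_succ]
  change ∑' n, g n = ∑' n, g (n + 1)
  by_cases hs : Summable fun n ↦ g (n + 1)
  · simp [tsum_eq_zero_add' hs, g]
  · rw [tsum_eq_zero_of_not_summable hs,
      tsum_eq_zero_of_not_summable (mt (summable_nat_add_iff 1).2 hs)]

lemma integral_natCast_poissonMeasure : ∫ n, (n : ℝ) ∂poissonMeasure r = r := by
  simpa using integral_natCast_mul_poissonMeasure r 1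

lemma integral_natCast_sq_poissonMeasure :
    ∫ n, (n : ℝ) ^ 2 ∂poissonMeasure r = r ^ 2 + r := by
  have hint : Integrable (fun n : ℕ ↦ (n : ℝ)) (poissonMeasure r) :=
    memLp_one_iff_integrable.1 (by simpa using memLp_natCast_poissonMeasure r 1)
  simp only [sq, integral_natCast_mul_poissonMeasure r (fun n ↦ (n : ℝ)), Nat.cast_succ,
    integral_add hint (integrable_const 1), integral_natCast_poissonMeasure, integral_const,
    probReal_univ, smul_eq_mul, mul_one]
  ring

lemma variance_natCast_poissonMeasure :
    Var[fun n : ℕ ↦ (n : ℝ); poissonMeasure r] = r := by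
  rw [variance_eq_sub (by simpa using memLp_natCast_poissonMeasure r 2)]
  simp only [Pi.pow_apply, integral_natCast_sq_poissonMeasure, integral_natCast_poissonMeasure]
  ring

lemma integral_sub_sq_poissonMeasure : ∫ n, ((n : ℝ) - r) ^ 2 ∂poissonMeasure r = r := by
  have h := variance_eq_integral (X := fun n : ℕ ↦ (n : ℝ)) (μ := poissonMeasure r) (by fun_prop)
  rwa [variance_natCast_poissonMeasure, integral_natCast_poissonMeasure, eq_comm] at h

end ProbabilityTheory

/-- Let `1 ≤ p < 2` and `N` Poisson with parameter `0 ≤ λ ≤ 1`. Then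
`λ² ≤ E|N-λ|^p · E|N-λ|^(4-p)`, and hence, using an upper bound
`E|N-λ|^(4-p) ≤ c λ`, one has `E|N-λ|^p ≥ λ / c`. -/
theorem poisson_central_moment_lower_via_cauchy_schwarz
    (p : ℝ) (hp1 : 1 ≤ p) (hp2 : p < 2)
    (c : ℝ) (hc : 0 < c)
    (hupper : ∀ lam : NNReal, lam ≤ 1 →
      (∫ n : ℕ, |(n : ℝ) - (lam : ℝ)| ^ (4 - p) ∂(poissonMeasure lam)) ≤ c * (lam : ℝ))
    (lam : NNReal) (hlam : lam ≤ 1) :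
    (lam : ℝ) ^ 2 ≤
        (∫ n : ℕ, |(n : ℝ) - (lam : ℝ)| ^ p ∂(poissonMeasure lam)) *
          (∫ n : ℕ, |(n : ℝ) - (lam : ℝ)| ^ (4 - p) ∂(poissonMeasure lam)) ∧
      (lam : ℝ) / c ≤ ∫ n : ℕ, |(n : ℝ) - (lam : ℝ)| ^ p ∂(poissonMeasure lam) := by
  have hsecond : ∫ n : ℕ, |(n : ℝ) - lam| ^ ((p + (4 - p)) / 2) ∂poissonMeasure lam = lam := by
    rw [show (p + (4 - p)) / 2 = (2 : ℝ) by ring]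
    simpa only [rpow_two, sq_abs] using integral_sub_sq_poissonMeasure lam
  have hCS := sq_integral_abs_rpow_add_div_two_le (X := fun n : ℕ ↦ (n : ℝ) - lam)
    (a := p) (b := 4 - p) (by fun_prop) (by linarith) (by linarith)
    (integrable_abs_sub_rpow_poissonMeasure lam lam (by linarith))
    (integrable_abs_sub_rpow_poissonMeasure lam lam (by linarith))
  rw [hsecond] at hCS
  refine ⟨hCS, (div_le_iff₀ hc).2 ?_⟩
  have hA : 0 ≤ ∫ n : ℕ, |(n : ℝ) - lam| ^ p ∂poissonMeasure lam :=
    integral_nonneg fun _ ↦ rpow_nonneg (abs_nonneg _) _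
  nlinarith [mul_le_mul_of_nonneg_left (hupper lam hlam) hA, lam.coe_nonneg,
    mul_nonneg hA hc.le]
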